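/- arXiv:1712.00524 — 4 statements merged into one kernel-verified Lean document; each statement's English description precedes it below -/
import Mathlib

section
/- If P is a TP2 stochastic matrix, 0 ≤ ρ < 1, and v = (I − ρP)r has decreasing elements (v(1) ≥ v(2) ≥ ⋯ ≥ v(S)), then r itself has decreasing elements. -/
def IsTP2 {S : ℕ} (A : Fin S → Fin S → ℝ) : Prop :=
  (∀ i j, 0 ≤ A i j) ∧
  ∀ i₁ i₂ j₁ j₂ : Fin S, i₁ ≤ i₂ → j₁ ≤ j₂ →
    A i₁ j₂ * A i₂ j₁ ≤ A i₁ j₁ * A i₂ j₂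

def IsStochastic {S : ℕ} (A : Fin S → Fin S → ℝ) : Prop :=
  (∀ i j, 0 ≤ A i j) ∧ ∀ i, ∑ j, A i j = 1

/-! Let `M` be the largest increase `r l - r k` over `k ≤ l`. Pairing the terms `(k, l)` and
`(l, k)` writes `(P r) j - (P r) i` as `∑_{k<l} (P i k * P j l - P i l * P j k) * (r l - r k)`;
for `i ≤ j` the weights are nonnegative by TP2 and sum to at most one, so the increases of `P r`
are also bounded by `M`. At a maximising pair, monotonicity of `v = r - ρ P r` then gives
`M ≤ ρ M`, hence `M ≤ 0`. -/

open Finset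

theorem sum_sum_eq_sum_sum_lt_add {ι M : Type*} [Fintype ι] [LinearOrder ι] [AddCommMonoid M]
    (g : ι → ι → M) (hg : ∀ k, g k k = 0) :
    ∑ k, ∑ l, g k l = ∑ k, ∑ l with k < l, (g k l + g l k) := by
  have hsplit : ∀ k, ∑ l, g k l = ∑ l with k < l, g k l + ∑ l with l < k, g k l := by
    intro k
    rw [sum_filter, sum_filter, ← sum_add_distrib]
    refine sum_congr rfl fun l _ => ?_
    rcases lt_trichotomy k l with h | rfl | h
    · simp [h, h.not_gt]
    · simp [hg]
    · simp [h, h.not_gt]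
  have hswap : ∑ k, ∑ l with l < k, g k l = ∑ k, ∑ l with k < l, g l k :=
    sum_comm' (by simp)
  simp only [sum_add_distrib, hsplit, hswap]

theorem IsStochastic.sum_mul_sub_sum_mul {S : ℕ} {P : Fin S → Fin S → ℝ} (hP : IsStochastic P)
    (f : Fin S → ℝ) (i j : Fin S) :
    ∑ l, P j l * f l - ∑ k, P i k * f k = ∑ k, ∑ l, P i k * P j l * (f l - f k) := by
  have hrow : ∀ k, ∑ l, P i k * P j l * (f l - f k) = P i k * ∑ l, P j l * f l - P i k * f k := by
    intro k
    simp only [mul_sub, sum_sub_distrib, mul_assoc, ← mul_sum, ← sum_mul, hP.2 j, one_mul]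
  rw [sum_congr rfl fun k _ => hrow k, sum_sub_distrib, ← sum_mul, hP.2 i, one_mul]

theorem IsTP2.sum_mul_sub_sum_mul_le {S : ℕ} {P : Fin S → Fin S → ℝ} (hP : IsTP2 P)
    (hPs : IsStochastic P) {f : Fin S → ℝ} {M : ℝ} (hf : ∀ k l, k ≤ l → f l - f k ≤ M)
    {i j : Fin S} (hij : i ≤ j) :
    ∑ l, P j l * f l - ∑ l, P i l * f l ≤ M := by
  have hM : 0 ≤ M := by simpa using hf i i le_rfl
  rw [hPs.sum_mul_sub_sum_mul, sum_sum_eq_sum_sum_lt_add _ (by simp)]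
  calc ∑ k, ∑ l with k < l, (P i k * P j l * (f l - f k) + P i l * P j k * (f k - f l))
      ≤ ∑ k, ∑ l with k < l, P i k * P j l * M := by
        gcongr with k _ l hl
        have hkl : k < l := (mem_filter.1 hl).2
        have htp := hP.2 i j k l hij hkl.le
        have hcross := mul_nonneg (hPs.1 i l) (hPs.1 j k)
        nlinarith [hf k l hkl.le]
    _ ≤ ∑ k, ∑ l, P i k * P j l * M := by
        refine sum_le_sum fun k _ => sum_le_sum_of_subset_of_nonneg (filter_subset _ _) ?_
        exact fun l _ _ => mul_nonneg (mul_nonneg (hPs.1 i k) (hPs.1 j l)) hM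
    _ = M := by simp only [← sum_mul, ← mul_sum, hPs.2, mul_one, one_mul]

/-- If `P` is TP2 stochastic, `0 ≤ ρ < 1`, and `v = (I − ρP) r` has
decreasing elements, then `r` has decreasing elements. -/
theorem r_decreasing_of_v_decreasing {S : ℕ} (P : Fin S → Fin S → ℝ)
    (r : Fin S → ℝ) (ρ : ℝ) (hρ0 : 0 ≤ ρ) (hρ1 : ρ < 1)
    (hPs : IsStochastic P) (hP : IsTP2 P)
    (hv : Antitone (fun i => r i - ρ * ∑ j, P i j * r j)) :
    Antitone r := by
  intro a b hab
  obtain ⟨⟨k, l⟩, hkl, hmax⟩ := (univ.filter fun p : Fin S × Fin S => p.1 ≤ p.2).exists_max_image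
    (fun p => r p.2 - r p.1) ⟨(a, b), by simpa using hab⟩
  simp only [mem_filter, mem_univ, true_and, Prod.forall] at hkl hmax
  have hcontract := mul_le_mul_of_nonneg_left (hP.sum_mul_sub_sum_mul_le hPs hmax hkl) hρ0
  have hstep := hv hkl
  have hmax_nonpos : r l - r k ≤ 0 := by nlinarith
  linarith [hmax a b hab]
end

section
/- If P is a TP2 stochastic matrix and v ∈ ℝ^S has decreasing elements, then Pv has decreasing elements. -/
/-- `p ≤ q` in the likelihood-ratio order: `q k / p k` increases with `k`, cross-multiplied so
that zero weights need no special treatment. -/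
def LikelihoodRatioLE {ι : Type*} [LinearOrder ι] (p q : ι → ℝ) : Prop :=
  ∀ j k, j ≤ k → p k * q j ≤ p j * q k

theorem sum_sum_mul_mul_sub {ι : Type*} [Fintype ι] (p q v : ι → ℝ) :
    ∑ j, ∑ k, p j * q k * (v j - v k) =
      (∑ j, p j * v j) * ∑ k, q k - (∑ j, p j) * ∑ k, q k * v k := by
  simp only [Finset.sum_mul_sum, ← Finset.sum_sub_distrib]
  exact Finset.sum_congr rfl fun j _ => Finset.sum_congr rfl fun k _ => by ring

namespace LikelihoodRatioLE

variable {ι : Type*} [LinearOrder ι] {p q v : ι → ℝ}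

theorem mul_sub_nonneg (h : LikelihoodRatioLE p q) (hv : Antitone v) (j k : ι) :
    0 ≤ (p j * q k - p k * q j) * (v j - v k) := by
  rcases le_total j k with hjk | hkj
  · exact mul_nonneg (sub_nonneg.2 (h j k hjk)) (sub_nonneg.2 (hv hjk))
  · exact mul_nonneg_of_nonpos_of_nonpos (sub_nonpos.2 (h k j hkj)) (sub_nonpos.2 (hv hkj))

theorem sum_mul_sum_le [Fintype ι] (h : LikelihoodRatioLE p q) (hv : Antitone v) :
    (∑ j, p j) * ∑ k, q k * v k ≤ (∑ j, p j * v j) * ∑ k, q k := by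
  have hsymm : ∑ j, ∑ k, p k * q j * (v k - v j) = ∑ j, ∑ k, p j * q k * (v j - v k) :=
    Finset.sum_comm
  have hpairs : 0 ≤ ∑ j, ∑ k, (p j * q k * (v j - v k) + p k * q j * (v k - v j)) :=
    Finset.sum_nonneg fun j _ => Finset.sum_nonneg fun k _ => by
      linear_combination h.mul_sub_nonneg hv j k
  simp only [Finset.sum_add_distrib, hsymm] at hpairs
  linarith [sum_sum_mul_mul_sub p q v]

end LikelihoodRatioLE

theorem IsTP2.likelihoodRatioLE {S : ℕ} {P : Fin S → Fin S → ℝ} (hP : IsTP2 P) {i₁ i₂ : Fin S}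
    (h : i₁ ≤ i₂) : LikelihoodRatioLE (P i₁) (P i₂) :=
  fun j k hjk => hP.2 i₁ i₂ j k h hjk

/-- A TP2 stochastic matrix maps decreasing vectors to decreasing vectors. -/
theorem tp2_preserves_antitone {S : ℕ} (P : Fin S → Fin S → ℝ)
    (hPs : IsStochastic P) (hP : IsTP2 P) (v : Fin S → ℝ) (hv : Antitone v) :
    Antitone (fun i => ∑ j, P i j * v j) := by
  intro i₁ i₂ h
  simpa [hPs.2] using (hP.likelihoodRatioLE h).sum_mul_sum_le hv
end

section
/- The MLR order restricted to any line segment L(e₁, π̄) = {(1−γ)π̄ + γe₁ : γ ∈ [0,1]}, with π̄(1) = 0, is a total (linear) order: any two points on the segment are MLR comparable. -/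
def IsProbVec {S : ℕ} (π : Fin S → ℝ) : Prop :=
  (∀ i, 0 ≤ π i) ∧ ∑ i, π i = 1

def MLR {S : ℕ} (π₁ π₂ : Fin S → ℝ) : Prop :=
  ∀ i j : Fin S, i < j → π₁ j * π₂ i ≤ π₂ j * π₁ i

def linePt {S : ℕ} (π' : Fin (S + 1) → ℝ) (γ : ℝ) : Fin (S + 1) → ℝ :=
  fun i => γ * (if i = 0 then 1 else 0) + (1 - γ) * π' i

/-! Away from the first coordinate two points of the segment are proportional, so their MLR
cross-differences vanish except against the first coordinate, where the difference is
`(γ₁ - γ₂) * π' j`. Its sign is that of `γ₁ - γ₂`, so the segment is MLR-ordered by `γ`. -/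

lemma linePt_mlr_cross_sub {S : ℕ} (π' : Fin (S + 1) → ℝ) (γ₁ γ₂ : ℝ) {i j : Fin (S + 1)}
    (hj : j ≠ 0) :
    linePt π' γ₂ j * linePt π' γ₁ i - linePt π' γ₁ j * linePt π' γ₂ i =
      if i = 0 then (γ₁ - γ₂) * π' j else 0 := by
  split_ifs with hi
  · subst hi
    simp only [linePt, hj, if_true, if_false]
    ring
  · simp only [linePt, hi, hj, if_false]
    ring

lemma mlr_linePt_of_le {S : ℕ} {π' : Fin (S + 1) → ℝ} (hπ : ∀ i, 0 ≤ π' i) {γ₁ γ₂ : ℝ}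
    (hγ : γ₂ ≤ γ₁) : MLR (linePt π' γ₁) (linePt π' γ₂) := by
  intro i j hij
  rw [← sub_nonneg, linePt_mlr_cross_sub π' γ₁ γ₂ (Fin.ne_zero_of_lt hij)]
  split_ifs
  · exact mul_nonneg (sub_nonneg.mpr hγ) (hπ j)
  · exact le_rfl

theorem mlr_total_on_line_general {S : ℕ} (π' : Fin (S + 1) → ℝ)
    (hπ : IsProbVec π')
    (γ₁ γ₂ : ℝ) :
    MLR (linePt π' γ₁) (linePt π' γ₂) ∨ MLR (linePt π' γ₂) (linePt π' γ₁) :=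
  (le_total γ₂ γ₁).imp (mlr_linePt_of_le hπ.1) (mlr_linePt_of_le hπ.1)

/-- The MLR order restricted to a line segment `L(e₁, π̄)` with `π̄(1)=0`
is total: any two points on the segment are MLR comparable. -/
theorem mlr_total_on_line {S : ℕ} (π' : Fin (S + 1) → ℝ)
    (hπ : IsProbVec π') (h0 : π' 0 = 0)
    (γ₁ γ₂ : ℝ) (h₁ : γ₁ ∈ Set.Icc (0:ℝ) 1) (h₂ : γ₂ ∈ Set.Icc (0:ℝ) 1) :
    MLR (linePt π' γ₁) (linePt π' γ₂) ∨ MLR (linePt π' γ₂) (linePt π' γ₁) :=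
  mlr_total_on_line_general π' hπ γ₁ γ₂
end

section
/- If the transition matrix P and observation matrix B are both TP2, then the HMM filter preserves MLR dominance: π₁ ≥_r π₂ implies T(π₁,y) ≥_r T(π₂,y) for every observation y. -/
/-- TP2 property for a rectangular kernel. -/
def IsTP2Kernel {S m : ℕ} (A : Fin S → Fin m → ℝ) : Prop :=
  (∀ i j, 0 ≤ A i j) ∧
  ∀ (i₁ i₂ : Fin S) (j₁ j₂ : Fin m), i₁ ≤ i₂ → j₁ ≤ j₂ →
    A i₁ j₂ * A i₂ j₁ ≤ A i₁ j₁ * A i₂ j₂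

/-- Normalization `σ(π,y) = 1' B_y P' π`. -/
def sigmaNorm {S m : ℕ} (P : Fin S → Fin S → ℝ) (B : Fin S → Fin m → ℝ)
    (π : Fin S → ℝ) (y : Fin m) : ℝ :=
  ∑ i, B i y * ∑ j, P j i * π j

/-- HMM filter `T(π,y) = B_y P' π / σ(π,y)`. -/
noncomputable def hmmFilter {S m : ℕ} (P : Fin S → Fin S → ℝ)
    (B : Fin S → Fin m → ℝ) (π : Fin S → ℝ) (y : Fin m) : Fin S → ℝ :=
  fun i => B i y * (∑ j, P j i * π j) / sigmaNorm P B π y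

/-!
Dividing by the normalisations and multiplying by the diagonal of `B_y` rescale the MLR
cross-differences by nonnegative factors, so only the prediction step `π ↦ P'π` matters.
There the cross-difference of `P'π₁` and `P'π₂` is a double sum whose symmetrised terms are
products of a `2 × 2` minor of `P` with one of `(π₁, π₂)`, both nonnegative.
-/

theorem Finset.sum_sum_nonneg_of_add_swap_nonneg {ι α : Type*} [Fintype ι]
    [AddCommGroup α] [LinearOrder α] [IsOrderedAddMonoid α]
    (f : ι → ι → α) (hf : ∀ a b, 0 ≤ f a b + f b a) :
    0 ≤ ∑ a, ∑ b, f a b := by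
  have hsum : 0 ≤ ∑ a, ∑ b, (f a b + f b a) :=
    Finset.sum_nonneg fun a _ => Finset.sum_nonneg fun b _ => hf a b
  have hswap : ∑ a, ∑ b, f b a = ∑ a, ∑ b, f a b := Finset.sum_comm
  simp only [Finset.sum_add_distrib, hswap] at hsum
  exact not_lt.1 fun hneg => (add_neg hneg hneg).not_ge hsum

namespace MLR

variable {S : ℕ} {f g : Fin S → ℝ}

theorem mul_le_mul_of_le (h : MLR f g) {i j : Fin S} (hij : i ≤ j) :
    f j * g i ≤ g j * f i := by
  rcases hij.lt_or_eq with hij | rfl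
  · exact h i j hij
  · rw [mul_comm]

theorem mul_left {w : Fin S → ℝ} (hw : ∀ i, 0 ≤ w i) (h : MLR f g) :
    MLR (fun i => w i * f i) (fun i => w i * g i) := fun i j hij => by
  have := mul_le_mul_of_nonneg_left (h i j hij) (mul_nonneg (hw i) (hw j))
  linarith

theorem div_const (h : MLR f g) {c d : ℝ} (hc : 0 ≤ c) (hd : 0 ≤ d) :
    MLR (fun i => f i / c) (fun i => g i / d) := fun i j hij => by
  have := mul_le_mul_of_nonneg_left (h i j hij) (mul_nonneg (inv_nonneg.2 hc) (inv_nonneg.2 hd))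
  simp only [div_eq_mul_inv]
  linarith

end MLR

theorem IsTP2Kernel.mlr_sum_mul {n S : ℕ} {K : Fin n → Fin S → ℝ} (hK : IsTP2Kernel K)
    {π₁ π₂ : Fin n → ℝ} (hmlr : MLR π₁ π₂) :
    MLR (fun i => ∑ a, K a i * π₁ a) (fun i => ∑ a, K a i * π₂ a) := fun i j hij => by
  set f : Fin n → Fin n → ℝ := fun a b =>
    K a j * π₂ a * (K b i * π₁ b) - K a j * π₁ a * (K b i * π₂ b)
  have hswap_of_le : ∀ a b, a ≤ b → 0 ≤ f a b + f b a := fun a b hab => by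
    have hminor : 0 ≤ (π₂ b * π₁ a - π₁ b * π₂ a) * (K a i * K b j - K a j * K b i) :=
      mul_nonneg (sub_nonneg.2 (hmlr.mul_le_mul_of_le hab))
        (sub_nonneg.2 (hK.2 a b i j hab hij.le))
    linear_combination hminor
  have hswap : ∀ a b, 0 ≤ f a b + f b a := fun a b =>
    (le_total a b).elim (hswap_of_le a b) fun hba => add_comm (f b a) _ ▸ hswap_of_le b a hba
  have hdiff := Finset.sum_sum_nonneg_of_add_swap_nonneg f hswap
  simp only [f, Finset.sum_sub_distrib, ← Finset.mul_sum, ← Finset.sum_mul] at hdiff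
  linarith

theorem hmm_filter_preserves_mlr_general {S m : ℕ}
    (P : Fin S → Fin S → ℝ) (B : Fin S → Fin m → ℝ)
    (hP : IsTP2Kernel P) (hB : IsTP2Kernel B)
    (π₁ π₂ : Fin S → ℝ)
    (hmlr : MLR π₁ π₂) (y : Fin m)
    (hσ₁ : 0 < sigmaNorm P B π₁ y) (hσ₂ : 0 < sigmaNorm P B π₂ y) :
    MLR (hmmFilter P B π₁ y) (hmmFilter P B π₂ y) :=
  ((hP.mlr_sum_mul hmlr).mul_left fun i => hB.1 i y).div_const hσ₁.le hσ₂.le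

/-- If `P` and `B` are TP2, the HMM filter preserves MLR dominance. -/
theorem hmm_filter_preserves_mlr {S m : ℕ}
    (P : Fin S → Fin S → ℝ) (B : Fin S → Fin m → ℝ)
    (hPst : (∀ i j, 0 ≤ P i j) ∧ ∀ i, ∑ j, P i j = 1)
    (hP : IsTP2Kernel P) (hB : IsTP2Kernel B)
    (π₁ π₂ : Fin S → ℝ) (h₁ : IsProbVec π₁) (h₂ : IsProbVec π₂)
    (hmlr : MLR π₁ π₂) (y : Fin m)
    (hσ₁ : 0 < sigmaNorm P B π₁ y) (hσ₂ : 0 < sigmaNorm P B π₂ y) :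
    MLR (hmmFilter P B π₁ y) (hmmFilter P B π₂ y) :=
  hmm_filter_preserves_mlr_general P B hP hB π₁ π₂ hmlr y hσ₁ hσ₂
end
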